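/- If {u,v,w} and {u',v',w'} are positively oriented orthonormal bases of the same oriented 3-plane in ℝ^8, then X(u,v,w) = X(u',v',w'), where X is the octonionic triple cross product. Hence σ₃(u ∧ v ∧ w) = X(u,v,w) is a well-defined unit vector orthogonal to span{u,v,w}. -/

import Mathlib

open scoped RealInnerProductSpace

noncomputable section

abbrev Oct : Type := EuclideanSpace ℝ (Fin 8)

def octe (i : Fin 8) : Oct := EuclideanSpace.single i 1

def plusTriples : List (Fin 8 × Fin 8 × Fin 8) :=
  [(1,2,3),(1,4,5),(1,7,6),(2,4,6),(2,5,7),(3,4,7),(3,6,5)]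

/-- Completely skew-symmetric structure tensor taking the value `+1` on the
triples 123, 145, 176, 246, 257, 347, 365. -/
def eps (i j k : Fin 8) : ℝ :=
  if plusTriples.any (fun t => decide ((i,j,k) = t ∨ (i,j,k) = (t.2.1, t.2.2, t.1) ∨
      (i,j,k) = (t.2.2, t.1, t.2.1))) then 1
  else if plusTriples.any (fun t => decide ((i,j,k) = (t.1, t.2.2, t.2.1) ∨
      (i,j,k) = (t.2.2, t.2.1, t.1) ∨ (i,j,k) = (t.2.1, t.1, t.2.2))) then -1
  else 0

/-- Structure constants of octonion multiplication:
`e_0 e_i = e_i e_0 = e_i` and `e_i e_j = -δ_ij e_0 + ε_ijk e_k` for `i,j ≥ 1`. -/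
def structC (i j k : Fin 8) : ℝ :=
  if i = 0 then (if j = k then 1 else 0)
  else if j = 0 then (if i = k then 1 else 0)
  else (if i = j ∧ k = 0 then (-1:ℝ) else 0) + eps i j k

/-- Octonion multiplication on ℝ⁸. -/
def octMul (x y : Oct) : Oct := WithLp.toLp 2 (fun k => ∑ i, ∑ j, x i * y j * structC i j k)

/-- Octonionic conjugation. -/
def octConj (x : Oct) : Oct := WithLp.toLp 2 (fun k => if k = 0 then x 0 else -(x k))

/-- The triple cross product `X(u,v,w) = -u(v̄w) + ⟨u,v⟩w + ⟨v,w⟩u - ⟨w,u⟩v`. -/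
def X3 (u v w : Oct) : Oct :=
  -octMul u (octMul (octConj v) w) + ⟪u, v⟫ • w + ⟪v, w⟫ • u - ⟪w, u⟫ • v

/-- The double cross product `u × v = uv + ⟨u,v⟩ e_0` (on imaginary octonions). -/
def cross2 (u v : Oct) : Oct := octMul u v + ⟪u, v⟫ • octe 0

/-!
`X` is trilinear, and the octonion identities `u(v̄w) + v(ūw) = 2⟨u,v⟩w` and
`v̄w + w̄v = 2⟨v,w⟩e₀` make it antisymmetric in the first two and in the last two arguments. So it
is an alternating map, and replacing a basis of the plane by its image under `g` multiplies it by
`det g = 1`. For an orthonormal triple the inner-product terms vanish and `X(u,v,w) = -u(v̄w)`, a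
unit vector because the octonion norm is multiplicative. Finally `⟨X(u,v,w), u⟩ = 0` for all
`u, v, w`, by `⟨xy, z⟩ = ⟨y, x̄z⟩` and `ūu = |u|²e₀`; antisymmetry moves `v` and `w` into the first
slot. The octonion identities themselves are checked coordinatewise from the multiplication table.
-/

namespace AlternatingMap

variable {R M N ι : Type*} [CommRing R] [AddCommGroup M] [Module R M] [AddCommGroup N]
  [Module R N] [Fintype ι] [DecidableEq ι]

theorem eq_smulRight_basis_det (e : Module.Basis ι R M) (f : M [⋀^ι]→ₗ[R] N) :
    f = e.det.smulRight (f e) := by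
  refine e.ext_alternating fun i h => ?_
  let σ : Equiv.Perm ι := Equiv.ofBijective i (Finite.injective_iff_bijective.1 h)
  change f (e ∘ σ) = e.det (e ∘ σ) • f e
  simp [map_perm, Module.Basis.det_self]

theorem map_sum_smul_eq_det_smul (f : M [⋀^ι]→ₗ[R] N) (A : Matrix ι ι R) (v : ι → M) :
    f (fun i => ∑ j, A i j • v j) = A.det • f v := by
  have h := congrArg (fun F => F (fun i j => A i j)) <|
    (f.compLinearMap (Fintype.linearCombination R v)).eq_smulRight_basis_det (Pi.basisFun R ι)
  simp only [compLinearMap_apply, smulRight_apply, Pi.basisFun_det_apply, Pi.basisFun_apply,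
    Fintype.linearCombination_apply] at h
  simp only [Pi.single_apply, ite_smul, one_smul, zero_smul, Finset.sum_ite_eq', Finset.mem_univ,
    if_true] at h
  exact h

end AlternatingMap

lemma octMul_eq (x y : Oct) : octMul x y = !₂[
    x 0 * y 0 - x 1 * y 1 - x 2 * y 2 - x 3 * y 3 - x 4 * y 4 - x 5 * y 5 - x 6 * y 6 - x 7 * y 7,
    x 0 * y 1 + x 1 * y 0 + x 2 * y 3 - x 3 * y 2 + x 4 * y 5 - x 5 * y 4 - x 6 * y 7 + x 7 * y 6,
    x 0 * y 2 - x 1 * y 3 + x 2 * y 0 + x 3 * y 1 + x 4 * y 6 + x 5 * y 7 - x 6 * y 4 - x 7 * y 5,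
    x 0 * y 3 + x 1 * y 2 - x 2 * y 1 + x 3 * y 0 + x 4 * y 7 - x 5 * y 6 + x 6 * y 5 - x 7 * y 4,
    x 0 * y 4 - x 1 * y 5 - x 2 * y 6 - x 3 * y 7 + x 4 * y 0 + x 5 * y 1 + x 6 * y 2 + x 7 * y 3,
    x 0 * y 5 + x 1 * y 4 - x 2 * y 7 + x 3 * y 6 - x 4 * y 1 + x 5 * y 0 - x 6 * y 3 + x 7 * y 2,
    x 0 * y 6 + x 1 * y 7 + x 2 * y 4 - x 3 * y 5 - x 4 * y 2 + x 5 * y 3 + x 6 * y 0 - x 7 * y 1,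
    x 0 * y 7 - x 1 * y 6 + x 2 * y 5 + x 3 * y 4 - x 4 * y 3 - x 5 * y 2 + x 6 * y 1 + x 7 * y 0] := by
  ext k
  fin_cases k <;> simp [octMul, structC, eps, plusTriples, Fin.sum_univ_eight] <;> ring

lemma octConj_eq (x : Oct) : octConj x = !₂[x 0, -x 1, -x 2, -x 3, -x 4, -x 5, -x 6, -x 7] := by
  ext k
  fin_cases k <;> simp [octConj]

lemma octe_zero_eq : octe 0 = !₂[1, 0, 0, 0, 0, 0, 0, 0] := by
  ext k
  fin_cases k <;> simp [octe]

lemma inner_oct_eq_sum (x y : Oct) : ⟪x, y⟫ = ∑ i, x i * y i := by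
  simp [PiLp.inner_apply, mul_comm]

section Bilinearity

variable (r : ℝ) (x y z : Oct)

lemma octMul_add_left : octMul (x + y) z = octMul x z + octMul y z := by
  ext k
  simp [octMul, add_mul, Finset.sum_add_distrib]

lemma octMul_add_right : octMul x (y + z) = octMul x y + octMul x z := by
  ext k
  simp [octMul, mul_add, add_mul, Finset.sum_add_distrib]

lemma octMul_smul_left : octMul (r • x) z = r • octMul x z := by
  ext k
  simp [octMul, Finset.mul_sum, mul_assoc]

lemma octMul_smul_right : octMul x (r • z) = r • octMul x z := by
  ext k
  simp only [octMul, PiLp.smul_apply, smul_eq_mul, WithLp.ofLp_toLp, Finset.mul_sum]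
  exact Finset.sum_congr rfl fun _ _ => Finset.sum_congr rfl fun _ _ => by ring

lemma octConj_add : octConj (x + y) = octConj x + octConj y := by
  ext k
  fin_cases k <;> simp [octConj_eq] <;> ring

lemma octConj_smul : octConj (r • x) = r • octConj x := by
  ext k
  fin_cases k <;> simp [octConj_eq]

end Bilinearity

lemma octMul_octe_zero (x : Oct) : octMul x (octe 0) = x := by
  ext k
  fin_cases k <;> simp [octMul_eq, octe_zero_eq]

lemma octConj_octConj (x : Oct) : octConj (octConj x) = x := by
  ext k
  fin_cases k <;> simp [octConj_eq]

lemma inner_octConj_octConj (x y : Oct) : ⟪octConj x, octConj y⟫ = ⟪x, y⟫ := by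
  simp [inner_oct_eq_sum, octConj_eq, Fin.sum_univ_eight]

lemma inner_octMul_left (x y z : Oct) : ⟪octMul x y, z⟫ = ⟪y, octMul (octConj x) z⟫ := by
  simp only [inner_oct_eq_sum, octMul_eq, octConj_eq, Fin.sum_univ_eight]
  simp
  ring

lemma octConj_mul_add_octConj_mul (x y : Oct) :
    octMul (octConj x) y + octMul (octConj y) x = (2 * ⟪x, y⟫) • octe 0 := by
  ext k
  fin_cases k <;>
    simp [octMul_eq, octConj_eq, octe_zero_eq, inner_oct_eq_sum, Fin.sum_univ_eight] <;> ring

lemma octMul_octConj_mul_add (x y z : Oct) :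
    octMul x (octMul (octConj y) z) + octMul y (octMul (octConj x) z) = (2 * ⟪x, y⟫) • z := by
  ext k
  fin_cases k <;> simp [octMul_eq, octConj_eq, inner_oct_eq_sum, Fin.sum_univ_eight] <;> ring

lemma octMul_octConj_mul_self (x y : Oct) : octMul x (octMul (octConj x) y) = ⟪x, x⟫ • y := by
  have h := octMul_octConj_mul_add x x y
  rw [← two_smul ℝ, mul_smul] at h
  exact smul_right_injective Oct two_ne_zero h

lemma octConj_mul_self (x : Oct) : octMul (octConj x) x = ⟪x, x⟫ • octe 0 := by
  have h := octConj_mul_add_octConj_mul x x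
  rw [← two_smul ℝ, mul_smul] at h
  exact smul_right_injective Oct two_ne_zero h

lemma inner_octConj_mul_octe_zero (x y : Oct) : ⟪octMul (octConj x) y, octe 0⟫ = ⟪y, x⟫ := by
  rw [inner_octMul_left, octConj_octConj, octMul_octe_zero]

lemma norm_octConj (x : Oct) : ‖octConj x‖ = ‖x‖ := by
  rw [norm_eq_sqrt_real_inner, norm_eq_sqrt_real_inner, inner_octConj_octConj]

lemma norm_octMul (x y : Oct) : ‖octMul x y‖ = ‖x‖ * ‖y‖ := by
  have h := octMul_octConj_mul_self (octConj x) y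
  rw [octConj_octConj, inner_octConj_octConj] at h
  rw [norm_eq_sqrt_real_inner, inner_octMul_left, h, real_inner_smul_right,
    Real.sqrt_mul real_inner_self_nonneg, ← norm_eq_sqrt_real_inner, ← norm_eq_sqrt_real_inner]

section Trilinearity

variable (r : ℝ) (u v w x : Oct)

lemma X3_add_left : X3 (u + x) v w = X3 u v w + X3 x v w := by
  simp only [X3, octMul_add_left, inner_add_left, inner_add_right]
  module

lemma X3_add_middle : X3 u (v + x) w = X3 u v w + X3 u x w := by
  simp only [X3, octConj_add, octMul_add_left, octMul_add_right, inner_add_left, inner_add_right]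
  module

lemma X3_add_right : X3 u v (w + x) = X3 u v w + X3 u v x := by
  simp only [X3, octMul_add_right, inner_add_left, inner_add_right]
  module

lemma X3_smul_left : X3 (r • u) v w = r • X3 u v w := by
  simp only [X3, octMul_smul_left, real_inner_smul_left, real_inner_smul_right]
  module

lemma X3_smul_middle : X3 u (r • v) w = r • X3 u v w := by
  simp only [X3, octConj_smul, octMul_smul_left, octMul_smul_right, real_inner_smul_left,
    real_inner_smul_right]
  module

lemma X3_smul_right : X3 u v (r • w) = r • X3 u v w := by
  simp only [X3, octMul_smul_right, real_inner_smul_left, real_inner_smul_right]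
  module

end Trilinearity

lemma X3_swap_left (u v w : Oct) : X3 v u w = -X3 u v w := by
  have h := octMul_octConj_mul_add u v w
  simp only [X3, real_inner_comm u v, real_inner_comm u w, real_inner_comm v w] at h ⊢
  linear_combination (norm := module) -h

lemma X3_swap_right (u v w : Oct) : X3 u w v = -X3 u v w := by
  have h := congrArg (octMul u) (octConj_mul_add_octConj_mul v w)
  rw [octMul_add_right, octMul_smul_right, octMul_octe_zero] at h
  simp only [X3, real_inner_comm u v, real_inner_comm u w, real_inner_comm v w] at h ⊢
  linear_combination (norm := module) -h

lemma X3_self_left (u w : Oct) : X3 u u w = 0 := by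
  have h := X3_swap_left u u w
  rwa [eq_neg_iff_add_eq_zero, ← two_smul ℝ, smul_eq_zero_iff_right two_ne_zero] at h

lemma X3_self_right (u v : Oct) : X3 u v v = 0 := by
  have h := X3_swap_right u v v
  rwa [eq_neg_iff_add_eq_zero, ← two_smul ℝ, smul_eq_zero_iff_right two_ne_zero] at h

lemma X3_self_outer (u v : Oct) : X3 u v u = 0 := by
  rw [X3_swap_right, X3_self_left, neg_zero]

def X3Alternating : Oct [⋀^Fin 3]→ₗ[ℝ] Oct where
  toFun v := X3 (v 0) (v 1) (v 2)
  map_update_add' := by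
    intro _ m i x y
    -- `simp` evaluates `Function.update` on `Fin 3` only with the standard instance
    obtain rfl : ‹DecidableEq (Fin 3)› = instDecidableEqFin 3 := Subsingleton.elim _ _
    fin_cases i <;> simp [X3_add_left, X3_add_middle, X3_add_right]
  map_update_smul' := by
    intro _ m i c x
    obtain rfl : ‹DecidableEq (Fin 3)› = instDecidableEqFin 3 := Subsingleton.elim _ _
    fin_cases i <;> simp [X3_smul_left, X3_smul_middle, X3_smul_right]
  map_eq_zero_of_eq' := by
    intro v i j hv hij
    fin_cases i <;> fin_cases j <;> simp_all [X3_self_left, X3_self_right, X3_self_outer]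

lemma inner_X3_left (u v w : Oct) : ⟪X3 u v w, u⟫ = 0 := by
  have h : ⟪octMul u (octMul (octConj v) w), u⟫ = ⟪u, u⟫ * ⟪w, v⟫ := by
    rw [inner_octMul_left, octConj_mul_self, real_inner_smul_right, inner_octConj_mul_octe_zero]
  simp only [X3, inner_sub_left, inner_add_left, inner_neg_left, real_inner_smul_left, h,
    real_inner_comm u v, real_inner_comm u w, real_inner_comm v w]
  ring

lemma inner_X3_middle (u v w : Oct) : ⟪X3 u v w, v⟫ = 0 := by
  rw [← neg_neg (X3 u v w), ← X3_swap_left, inner_neg_left, inner_X3_left, neg_zero]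

lemma inner_X3_right (u v w : Oct) : ⟪X3 u v w, w⟫ = 0 := by
  rw [← neg_neg (X3 u v w), ← X3_swap_right, ← X3_swap_left, inner_X3_left]

lemma X3_of_orthogonal {u v w : Oct} (huv : ⟪u, v⟫ = 0) (hvw : ⟪v, w⟫ = 0) (hwu : ⟪w, u⟫ = 0) :
    X3 u v w = -octMul u (octMul (octConj v) w) := by
  simp [X3, huv, hvw, hwu]

lemma norm_X3_of_orthogonal {u v w : Oct} (huv : ⟪u, v⟫ = 0) (hvw : ⟪v, w⟫ = 0)
    (hwu : ⟪w, u⟫ = 0) : ‖X3 u v w‖ = ‖u‖ * ‖v‖ * ‖w‖ := by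
  rw [X3_of_orthogonal huv hvw hwu, norm_neg, norm_octMul, norm_octMul, norm_octConj, mul_assoc]

theorem stmt7_general (f : Fin 3 → Oct)
    (horth : ∀ i j : Fin 3, ⟪f i, f j⟫ = if i = j then 1 else 0)
    (g : Matrix (Fin 3) (Fin 3) ℝ) (hdet : g.det = 1)
    (f' : Fin 3 → Oct) (hf' : ∀ i, f' i = ∑ j, g i j • f j) :
    X3 (f' 0) (f' 1) (f' 2) = X3 (f 0) (f 1) (f 2) ∧
    ‖X3 (f 0) (f 1) (f 2)‖ = 1 ∧
    ∀ m : Fin 3, ⟪X3 (f 0) (f 1) (f 2), f m⟫ = 0 := by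
  have hf : Orthonormal ℝ f := orthonormal_iff_ite.mpr horth
  refine ⟨?_, ?_, fun m => ?_⟩
  · calc X3 (f' 0) (f' 1) (f' 2) = X3Alternating (fun i => ∑ j, g i j • f j) := by
          simp only [← hf']; rfl
      _ = X3 (f 0) (f 1) (f 2) := by
          rw [X3Alternating.map_sum_smul_eq_det_smul, hdet, one_smul]; rfl
  · rw [norm_X3_of_orthogonal (hf.2 (by decide)) (hf.2 (by decide)) (hf.2 (by decide)),
      hf.1 0, hf.1 1, hf.1 2, one_mul, one_mul]
  · fin_cases m
    exacts [inner_X3_left _ _ _, inner_X3_middle _ _ _, inner_X3_right _ _ _]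

/-- `σ₃(u∧v∧w) = X(u,v,w)` is well defined on oriented 3-planes of ℝ⁸
(positively oriented orthonormal bases differ by an element of SO(3)) and
gives a unit vector orthogonal to the plane. -/
theorem stmt7 (f : Fin 3 → Oct)
    (horth : ∀ i j : Fin 3, ⟪f i, f j⟫ = if i = j then 1 else 0)
    (g : Matrix (Fin 3) (Fin 3) ℝ) (hg : g.transpose * g = 1) (hdet : g.det = 1)
    (f' : Fin 3 → Oct) (hf' : ∀ i, f' i = ∑ j, g i j • f j) :
    X3 (f' 0) (f' 1) (f' 2) = X3 (f 0) (f 1) (f 2) ∧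
    ‖X3 (f 0) (f 1) (f 2)‖ = 1 ∧
    ∀ m : Fin 3, ⟪X3 (f 0) (f 1) (f 2), f m⟫ = 0 :=
  stmt7_general f horth g hdet f' hf'
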